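/- Let κ be continuous on [a,b] and y ∈ C³([a,b]) satisfy y''' + κy' = 0, y(a)=0, y'(a)=0, y''(a)=1. If k₀ ≤ κ(s) ≤ k₁ on [a,b] with k₁ ≤ (π/(b−a))², then ȳ_{k₁}(b−a) ≤ y(b) ≤ ȳ_{k₀}(b−a), where ȳ_k(s) = (1−c_k(s))/k for k ≠ 0 and s²/2 for k = 0. Equality in the lower (resp. upper) bound forces κ ≡ k₁ (resp. κ ≡ k₀) on [a,b]. -/

import Mathlib

/-- The generalized cosine `c_k`, solving `u'' + k u = 0`, `u(0)=1`, `u'(0)=0`. -/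
noncomputable def ck (k s : ℝ) : ℝ :=
  if 0 < k then Real.cos (Real.sqrt k * s)
  else if k = 0 then 1
  else Real.cosh (Real.sqrt (-k) * s)

/-- The generalized sine `s_k`, solving `u'' + k u = 0`, `u(0)=0`, `u'(0)=1`. -/
noncomputable def sk (k s : ℝ) : ℝ :=
  if 0 < k then Real.sin (Real.sqrt k * s) / Real.sqrt k
  else if k = 0 then s
  else Real.sinh (Real.sqrt (-k) * s) / Real.sqrt (-k)

/-- The function `ȳ_k`, solving `y''' + ky' = 0`, `y(0)=0`, `y'(0)=0`, `y''(0)=1`. -/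
noncomputable def ybar (k s : ℝ) : ℝ := if k = 0 then s ^ 2 / 2 else (1 - ck k s) / k

section Aux
open Real Set Filter Topology

lemma ck_zero (k : ℝ) : ck k 0 = 1 := by
  unfold ck; split_ifs <;> simp

lemma sk_zero (k : ℝ) : sk k 0 = 0 := by
  unfold sk; split_ifs <;> simp

lemma ybar_zero (k : ℝ) : ybar k 0 = 0 := by
  unfold ybar; split_ifs <;> simp [ck_zero]

lemma hasDerivAt_sk (k s : ℝ) : HasDerivAt (sk k) (ck k s) s := by
  unfold sk ck
  split_ifs with h1 h2
  · have hk : Real.sqrt k ≠ 0 := by positivity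
    have := ((Real.hasDerivAt_sin (Real.sqrt k * s)).comp s
      ((hasDerivAt_id s).const_mul (Real.sqrt k))).div_const (Real.sqrt k)
    refine this.congr_deriv ?_; symm
    field_simp
  · simpa using hasDerivAt_id' s
  · have hk : (0:ℝ) < Real.sqrt (-k) := by
      apply Real.sqrt_pos.mpr; push_neg at h1; rcases lt_or_eq_of_le h1 with h | h
      · linarith
      · exact absurd h h2
    have := ((Real.hasDerivAt_sinh (Real.sqrt (-k) * s)).comp s
      ((hasDerivAt_id s).const_mul (Real.sqrt (-k)))).div_const (Real.sqrt (-k))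
    refine this.congr_deriv ?_; symm
    field_simp

lemma hasDerivAt_ck (k s : ℝ) : HasDerivAt (ck k) (-k * sk k s) s := by
  unfold sk ck
  split_ifs with h1 h2
  · have hk : Real.sqrt k * Real.sqrt k = k := Real.mul_self_sqrt h1.le
    have := (Real.hasDerivAt_cos (Real.sqrt k * s)).comp s
      ((hasDerivAt_id s).const_mul (Real.sqrt k))
    refine this.congr_deriv ?_; symm
    have hne : Real.sqrt k ≠ 0 := by positivity
    field_simp
    rw [Real.sq_sqrt h1.le]
  · simpa [h2] using hasDerivAt_const s (1:ℝ)
  · have hkpos : (0:ℝ) < -k := by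
      push_neg at h1; rcases lt_or_eq_of_le h1 with h | h
      · linarith
      · exact absurd h h2
    have hk : Real.sqrt (-k) * Real.sqrt (-k) = -k := Real.mul_self_sqrt hkpos.le
    have hne : Real.sqrt (-k) ≠ 0 := by positivity
    have := (Real.hasDerivAt_cosh (Real.sqrt (-k) * s)).comp s
      ((hasDerivAt_id s).const_mul (Real.sqrt (-k)))
    refine this.congr_deriv ?_; symm
    field_simp
    rw [Real.sq_sqrt hkpos.le]
    ring

lemma hasDerivAt_ybar (k s : ℝ) : HasDerivAt (ybar k) (sk k s) s := by
  unfold ybar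
  split_ifs with h
  · subst h
    have := ((hasDerivAt_pow 2 s).div_const 2)
    refine this.congr_deriv ?_; symm
    simp [sk]
  · have := ((hasDerivAt_const s (1:ℝ)).sub (hasDerivAt_ck k s)).div_const k
    refine this.congr_deriv ?_; symm
    field_simp
    ring

lemma continuous_sk (k : ℝ) : Continuous (sk k) :=
  (hasDerivAt_sk k · |>.continuousAt) |> continuous_iff_continuousAt.mpr

lemma sqrt_le_of_le_sq {k L : ℝ} (hL : 0 < L) (hk : k ≤ (π / L) ^ 2) :
    Real.sqrt k ≤ π / L := by
  have h1 : (0:ℝ) ≤ π / L := by positivity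
  calc Real.sqrt k ≤ Real.sqrt ((π/L)^2) := Real.sqrt_le_sqrt hk
    _ = π / L := Real.sqrt_sq h1

lemma sk_nonneg {k L t : ℝ} (hL : 0 < L) (hk : k ≤ (π / L) ^ 2)
    (ht : t ∈ Icc 0 L) : 0 ≤ sk k t := by
  unfold sk
  split_ifs with h1 h2
  · apply div_nonneg _ (Real.sqrt_nonneg k)
    apply Real.sin_nonneg_of_nonneg_of_le_pi
    · exact mul_nonneg (Real.sqrt_nonneg _) ht.1
    · calc Real.sqrt k * t ≤ (π / L) * L := by
            apply mul_le_mul (sqrt_le_of_le_sq hL hk) ht.2 ht.1 (by positivity)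
        _ = π := by field_simp
  · exact ht.1
  · have h : (0:ℝ) ≤ Real.sqrt (-k) * t := mul_nonneg (Real.sqrt_nonneg _) ht.1
    exact div_nonneg (Real.sinh_nonneg_iff.mpr h) (Real.sqrt_nonneg _)

lemma sk_pos {k L t : ℝ} (hL : 0 < L) (hk : k ≤ (π / L) ^ 2)
    (ht : t ∈ Ioo 0 L) : 0 < sk k t := by
  unfold sk
  split_ifs with h1 h2
  · have hsq : (0:ℝ) < Real.sqrt k := Real.sqrt_pos.mpr h1
    apply div_pos _ hsq
    apply Real.sin_pos_of_pos_of_lt_pi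
    · exact mul_pos hsq ht.1
    · calc Real.sqrt k * t < Real.sqrt k * L := by
            exact mul_lt_mul_of_pos_left ht.2 hsq
        _ ≤ (π / L) * L := mul_le_mul_of_nonneg_right (sqrt_le_of_le_sq hL hk) hL.le
        _ = π := by field_simp
  · exact ht.1
  · have h3 : k < 0 := lt_of_le_of_ne (not_lt.mp h1) h2
    have hsq : (0:ℝ) < Real.sqrt (-k) := Real.sqrt_pos.mpr (by linarith)
    apply div_pos _ hsq
    exact Real.sinh_pos_iff.mpr (mul_pos hsq ht.1)

lemma hasDerivAt_sk_shift (k a u : ℝ) :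
    HasDerivAt (fun u => sk k (u - a)) (ck k (u - a)) u := by
  simpa using (hasDerivAt_sk k (u - a)).comp_sub_const u a

lemma hasDerivAt_ck_shift (k a u : ℝ) :
    HasDerivAt (fun u => ck k (u - a)) (-k * sk k (u - a)) u := by
  simpa using (hasDerivAt_ck k (u - a)).comp_sub_const u a

lemma key (a b k ε : ℝ) (κ v : ℝ → ℝ) (hab : a < b) (hk : k ≤ (π / (b - a)) ^ 2)
    (hvdiff : Differentiable ℝ v) (hv'diff : Differentiable ℝ (deriv v))
    (hode : ∀ s ∈ Icc a b, deriv (deriv v) s = -(κ s * v s))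
    (hsgn : ∀ s ∈ Icc a b, 0 ≤ ε * (k - κ s))
    (hva : v a = 0) (hva' : deriv v a = 1)
    (m : ℝ) (hmb : m ≤ b)
    (hpos : ∀ u ∈ Icc a m, 0 ≤ v u)
    (t : ℝ) (ht : t ∈ Ioc a m) (htb : t < b) :
    0 ≤ ε * (v t - sk k (t - a)) := by
  have hL : (0:ℝ) < b - a := by linarith
  set W : ℝ → ℝ := fun u => sk k (u - a) * deriv v u - ck k (u - a) * v u with hWdef
  have hW : ∀ u, HasDerivAt W (sk k (u - a) * (deriv (deriv v) u + k * v u)) u := by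
    intro u
    have h1 := (hasDerivAt_sk_shift k a u).mul (hv'diff u).hasDerivAt
    have h2 := (hasDerivAt_ck_shift k a u).mul (hvdiff u).hasDerivAt
    refine (h1.sub h2).congr_deriv ?_
    ring
  have hWa : W a = 0 := by simp [hWdef, sk_zero, ck_zero, hva]
  -- monotonicity of ε * W on [a, t]
  have hWnn : ∀ u ∈ Icc a t, 0 ≤ ε * W u := by
    have hmono : MonotoneOn (fun u => ε * W u) (Icc a t) := by
      apply monotoneOn_of_deriv_nonneg (convex_Icc a t)
      · exact (continuous_const.mul (continuous_iff_continuousAt.mpr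
          fun u => (hW u).continuousAt)).continuousOn
      · intro x _
        exact (((hW x).const_mul ε).differentiableAt).differentiableWithinAt
      · intro x hx
        rw [interior_Icc] at hx
        have hxab : x ∈ Icc a b := ⟨hx.1.le, by linarith [hx.2, ht.2, hmb]⟩
        rw [((hW x).const_mul ε).deriv, hode x hxab]
        have e : ε * (sk k (x - a) * (-(κ x * v x) + k * v x)) =
            (ε * (k - κ x)) * (sk k (x - a) * v x) := by ring
        rw [e]
        apply mul_nonneg (hsgn x hxab)
        apply mul_nonneg
        · exact sk_nonneg hL hk ⟨by linarith [hx.1], by linarith [hx.2]⟩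
        · exact hpos x ⟨hx.1.le, by linarith [hx.2, ht.2]⟩
    intro u hu
    have := hmono (left_mem_Icc.mpr (hu.1.trans hu.2)) hu hu.1
    simpa [hWa] using this
  have hspos : ∀ u ∈ Ioc a t, 0 < sk k (u - a) := by
    intro u hu
    exact sk_pos hL hk ⟨by linarith [hu.1], by linarith [hu.2, htb]⟩
  set Q : ℝ → ℝ := fun u => ε * (v u / sk k (u - a)) with hQdef
  have hQder : ∀ x ∈ Ioo a t, HasDerivAt Q (ε * (W x / (sk k (x - a))^2)) x := by
    intro x hx
    have hsx : sk k (x - a) ≠ 0 := (hspos x ⟨hx.1, hx.2.le⟩).ne'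
    have := ((hvdiff x).hasDerivAt.div (hasDerivAt_sk_shift k a x) hsx).const_mul ε
    refine this.congr_deriv ?_
    rw [hWdef]
    ring
  have hQmono : MonotoneOn Q (Ioc a t) := by
    apply monotoneOn_of_deriv_nonneg (convex_Ioc a t)
    · apply ContinuousOn.mul continuousOn_const
      apply ContinuousOn.div hvdiff.continuous.continuousOn
        (((continuous_sk k).comp (continuous_id.sub continuous_const)).continuousOn)
      exact fun u hu => (hspos u hu).ne'
    · intro x hx
      rw [interior_Ioc] at hx
      exact (hQder x hx).differentiableAt.differentiableWithinAt
    · intro x hx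
      rw [interior_Ioc] at hx
      rw [(hQder x hx).deriv]
      have e : ε * (W x / (sk k (x - a))^2) = (ε * W x) / (sk k (x - a))^2 := by ring
      rw [e]
      exact div_nonneg (hWnn x ⟨hx.1.le, hx.2.le⟩) (sq_nonneg _)
  -- the limit of Q at a from the right is ε
  have hne : 𝓝[>] a ≤ 𝓝[≠] a :=
    nhdsWithin_mono a fun x hx => ne_of_gt hx
  have h1 : Tendsto (fun u => v u / (u - a)) (𝓝[>] a) (𝓝 1) := by
    have h := (hasDerivAt_iff_tendsto_slope.mp (hvdiff a).hasDerivAt).mono_left hne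
    rw [hva'] at h
    exact h.congr fun u => by simp [slope_def_field, hva]
  have h2 : Tendsto (fun u => sk k (u - a) / (u - a)) (𝓝[>] a) (𝓝 1) := by
    have h := (hasDerivAt_iff_tendsto_slope.mp (hasDerivAt_sk_shift k a a)).mono_left hne
    rw [show a - a = 0 by ring, ck_zero] at h
    exact h.congr fun u => by simp [slope_def_field, sk_zero]
  have h3 : Tendsto (fun u => v u / sk k (u - a)) (𝓝[>] a) (𝓝 1) := by
    have h4 := h1.div h2 one_ne_zero
    rw [show (1:ℝ)/1 = 1 by norm_num] at h4
    apply h4.congr'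
    filter_upwards [Ioo_mem_nhdsGT_of_mem (left_mem_Ico.mpr ht.1)] with u hu
    have hu1 : u - a ≠ 0 := by have := hu.1; intro h; apply absurd h; intro h'; linarith
    have hu2 : sk k (u - a) ≠ 0 := (hspos u ⟨hu.1, hu.2.le⟩).ne'
    simp only [Pi.div_apply]
    field_simp
  have htend : Tendsto Q (𝓝[>] a) (𝓝 ε) := by
    have := h3.const_mul ε
    simpa using this
  have hQt : ε ≤ Q t := by
    apply le_of_tendsto htend
    filter_upwards [Ioo_mem_nhdsGT_of_mem (left_mem_Ico.mpr ht.1)] with u hu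
    exact hQmono ⟨hu.1, hu.2.le⟩ ⟨ht.1, le_refl t⟩ hu.2.le
  have hst : 0 < sk k (t - a) := hspos t ⟨ht.1, le_refl t⟩
  have h6 : ε * sk k (t - a) ≤ ε * v t := by
    calc ε * sk k (t - a) ≤ ε * (v t / sk k (t - a)) * sk k (t - a) :=
          mul_le_mul_of_nonneg_right hQt hst.le
      _ = ε * v t := by field_simp
  nlinarith [h6]

lemma slope_tendsto (a : ℝ) (v : ℝ → ℝ) (hvdiff : Differentiable ℝ v)
    (hva : v a = 0) (hva' : deriv v a = 1) :
    Tendsto (fun u => v u / (u - a)) (𝓝[>] a) (𝓝 1) := by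
  have hne : 𝓝[>] a ≤ 𝓝[≠] a := nhdsWithin_mono a fun x hx => ne_of_gt hx
  have h := (hasDerivAt_iff_tendsto_slope.mp (hvdiff a).hasDerivAt).mono_left hne
  rw [hva'] at h
  exact h.congr fun u => by simp [slope_def_field, hva]

lemma lower (a b k : ℝ) (κ v : ℝ → ℝ) (hab : a < b) (hk : k ≤ (π / (b - a)) ^ 2)
    (hvdiff : Differentiable ℝ v) (hv'diff : Differentiable ℝ (deriv v))
    (hode : ∀ s ∈ Icc a b, deriv (deriv v) s = -(κ s * v s))
    (hκ : ∀ s ∈ Icc a b, κ s ≤ k)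
    (hva : v a = 0) (hva' : deriv v a = 1) :
    ∀ t ∈ Icc a b, sk k (t - a) ≤ v t := by
  have hL : (0:ℝ) < b - a := by linarith
  have hsgn : ∀ s ∈ Icc a b, 0 ≤ (1:ℝ) * (k - κ s) := by
    intro s hs; have := hκ s hs; linarith
  set S : Set ℝ := {t | t ∈ Icc a b ∧ ∀ u ∈ Icc a t, 0 ≤ v u} with hSdef
  have hSne : a ∈ S := by
    refine ⟨left_mem_Icc.mpr hab.le, fun u hu => ?_⟩
    have : u = a := le_antisymm hu.2 hu.1
    simp [this, hva]
  have hSbdd : BddAbove S := ⟨b, fun t htS => htS.1.2⟩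
  set c := sSup S with hcdef
  have hac : a ≤ c := le_csSup hSbdd hSne
  have hcb : c ≤ b := csSup_le ⟨a, hSne⟩ fun t h => h.1.2
  have hvc : ∀ u ∈ Icc a c, 0 ≤ v u := by
    intro u hu
    rcases lt_or_eq_of_le hu.2 with hlt | he
    · obtain ⟨t', ht'S, hlt'⟩ := exists_lt_of_lt_csSup ⟨a, hSne⟩ hlt
      exact ht'S.2 u ⟨hu.1, hlt'.le⟩
    · rcases lt_or_eq_of_le hu.1 with ha | ha
      · have htd : Tendsto v (𝓝[<] u) (𝓝 (v u)) :=
          (hvdiff.continuous.tendsto u).mono_left nhdsWithin_le_nhds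
        apply ge_of_tendsto htd
        filter_upwards [Ioo_mem_nhdsLT_of_mem (right_mem_Ioc.mpr ha)] with x hx
        have hxc : x < c := he ▸ hx.2
        obtain ⟨t', ht'S, hlt'⟩ := exists_lt_of_lt_csSup ⟨a, hSne⟩ hxc
        exact ht'S.2 x ⟨hx.1.le, hlt'.le⟩
      · simp [← ha, hva]
  have hkey : ∀ t ∈ Ioc a c, t < b → sk k (t - a) ≤ v t := by
    intro t h1 h2
    have := key a b k 1 κ v hab hk hvdiff hv'diff hode hsgn hva hva' c hcb hvc t h1 h2
    linarith
  have hceqb : c = b := by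
    by_contra hne
    have hcb2 : c < b := lt_of_le_of_ne hcb hne
    have hexists : ∃ t₀, c < t₀ ∧ t₀ ∈ S := by
      rcases lt_or_eq_of_le hac with hca | hca
      · -- a < c : v c > 0 and continuity
        have hvcpos : 0 < v c :=
          lt_of_lt_of_le (sk_pos hL hk ⟨sub_pos.mpr hca, by linarith⟩)
            (hkey c ⟨hca, le_refl c⟩ hcb2)
        have hev : ∀ᶠ u in 𝓝 c, 0 < v u :=
          (hvdiff.continuous.tendsto c).eventually (eventually_gt_nhds hvcpos)
        obtain ⟨δ, hδ, hball⟩ := Metric.eventually_nhds_iff.mp hev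
        refine ⟨min (c + δ/2) b, lt_min (by linarith) hcb2, ⟨?_, ?_⟩⟩
        · exact ⟨le_trans hac (le_min (by linarith) hcb), min_le_right _ _⟩
        · intro u hu
          rcases le_or_gt u c with h | h
          · exact hvc u ⟨hu.1, h⟩
          · apply (hball ?_).le
            rw [Real.dist_eq, abs_lt]
            constructor
            · linarith
            · have := hu.2
              have h2 : u ≤ c + δ/2 := le_trans this (min_le_left _ _)
              linarith
      · -- c = a : use the slope limit
        have h1 := slope_tendsto a v hvdiff hva hva'
        have hev : ∀ᶠ u in 𝓝[>] a, 0 < v u / (u - a) :=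
          h1.eventually (eventually_gt_nhds one_pos)
        obtain ⟨t₀, ht₀, hsub⟩ := mem_nhdsGT_iff_exists_Ioc_subset.mp hev
        refine ⟨min t₀ b, ?_, ⟨?_, ?_⟩⟩
        · rw [← hca]; exact lt_min ht₀ hab
        · exact ⟨le_min (le_of_lt ht₀) hab.le, min_le_right _ _⟩
        · intro u hu
          rcases lt_or_eq_of_le hu.1 with h | h
          · have hmem : u ∈ Ioc a t₀ := ⟨h, le_trans hu.2 (min_le_left _ _)⟩
            have hq := hsub hmem
            have hua : 0 < u - a := sub_pos.mpr h
            have := mul_pos hq hua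
            rw [div_mul_cancel₀ _ hua.ne'] at this
            exact this.le
          · simp [← h, hva]
    obtain ⟨t₀, hct₀, ht₀S⟩ := hexists
    have : t₀ ≤ c := le_csSup hSbdd ht₀S
    linarith
  intro t ht
  rcases lt_or_eq_of_le ht.1 with hta | hta
  · rcases lt_or_eq_of_le ht.2 with htb | htb
    · exact hkey t ⟨hta, hceqb ▸ htb.le⟩ htb
    · -- t = b : take the limit from the left
      subst htb
      have htd : Tendsto (fun u => v u - sk k (u - a)) (𝓝[<] t) (𝓝 (v t - sk k (t - a))) := by
        apply Tendsto.sub (hvdiff.continuous.tendsto t)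
          (((continuous_sk k).comp (continuous_id.sub continuous_const)).tendsto t)
          |>.mono_left nhdsWithin_le_nhds
      have h0 : (0:ℝ) ≤ v t - sk k (t - a) := by
        apply ge_of_tendsto htd
        filter_upwards [Ioo_mem_nhdsLT_of_mem (right_mem_Ioc.mpr hta)] with x hx
        have := hkey x ⟨hx.1, hceqb ▸ hx.2.le⟩ hx.2
        linarith
      linarith
  · simp [← hta, hva, sk_zero]

lemma upper (a b k : ℝ) (κ v : ℝ → ℝ) (hab : a < b) (hk : k ≤ (π / (b - a)) ^ 2)
    (hvdiff : Differentiable ℝ v) (hv'diff : Differentiable ℝ (deriv v))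
    (hode : ∀ s ∈ Icc a b, deriv (deriv v) s = -(κ s * v s))
    (hκ : ∀ s ∈ Icc a b, k ≤ κ s)
    (hva : v a = 0) (hva' : deriv v a = 1)
    (hlow : ∀ u ∈ Icc a b, 0 ≤ v u) :
    ∀ t ∈ Icc a b, v t ≤ sk k (t - a) := by
  have hsgn : ∀ s ∈ Icc a b, 0 ≤ (-1:ℝ) * (k - κ s) := by
    intro s hs; have := hκ s hs; linarith
  have hkey : ∀ t ∈ Ioc a b, t < b → v t ≤ sk k (t - a) := by
    intro t h1 h2
    have := key a b k (-1) κ v hab hk hvdiff hv'diff hode hsgn hva hva' b le_rfl hlow t h1 h2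
    linarith
  intro t ht
  rcases lt_or_eq_of_le ht.1 with hta | hta
  · rcases lt_or_eq_of_le ht.2 with htb | htb
    · exact hkey t ⟨hta, htb.le⟩ htb
    · subst htb
      have htd : Tendsto (fun u => sk k (u - a) - v u) (𝓝[<] t) (𝓝 (sk k (t - a) - v t)) := by
        apply Tendsto.sub
          (((continuous_sk k).comp (continuous_id.sub continuous_const)).tendsto t)
          (hvdiff.continuous.tendsto t) |>.mono_left nhdsWithin_le_nhds
      have h0 : (0:ℝ) ≤ sk k (t - a) - v t := by
        apply ge_of_tendsto htd
        filter_upwards [Ioo_mem_nhdsLT_of_mem (right_mem_Ioc.mpr hta)] with x hx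
        have := hkey x ⟨hx.1, hx.2.le⟩ hx.2
        linarith
      linarith
  · simp [← hta, hva, sk_zero]

lemma eq_of_integral_eq {a b : ℝ} (hab : a < b) {f g : ℝ → ℝ}
    (hf : Continuous f) (hg : Continuous g)
    (hle : ∀ t ∈ Icc a b, f t ≤ g t)
    (hint : ∫ t in a..b, f t = ∫ t in a..b, g t) :
    ∀ t ∈ Icc a b, f t = g t := by
  by_contra hcon
  push_neg at hcon
  obtain ⟨t₀, ht₀, hne⟩ := hcon
  have hlt : f t₀ < g t₀ := lt_of_le_of_ne (hle t₀ ht₀) hne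
  set h : ℝ → ℝ := fun t => g t - f t with hhdef
  have hh : Continuous h := hg.sub hf
  set ε : ℝ := h t₀ / 2 with hε
  have hεpos : 0 < ε := by simp only [hε, hhdef]; linarith
  have hev : ∀ᶠ u in 𝓝 t₀, ε < h u :=
    (hh.tendsto t₀).eventually (eventually_gt_nhds (by simp only [hε, hhdef]; linarith))
  obtain ⟨δ, hδpos, hball⟩ := Metric.eventually_nhds_iff.mp hev
  set u : ℝ := max a (t₀ - δ/2) with hudef
  set w : ℝ := min b (t₀ + δ/2) with hwdef
  have hau : a ≤ u := le_max_left _ _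
  have hwb : w ≤ b := min_le_left _ _
  have hut₀ : u ≤ t₀ := max_le ht₀.1 (by linarith)
  have ht₀w : t₀ ≤ w := le_min ht₀.2 (by linarith)
  have h1 : t₀ - δ/2 ≤ u := le_max_right _ _
  have h2 : w ≤ t₀ + δ/2 := min_le_right _ _
  have huw : u < w := by
    rcases le_or_gt (t₀ + δ/2) b with hc | hc
    · have hw : w = t₀ + δ/2 := min_eq_right hc
      rw [hw]; linarith
    · have hw : w = b := min_eq_left hc.le
      rw [hw]
      exact max_lt hab (by linarith [ht₀.2])
  have hmid : ∀ x ∈ Icc u w, ε ≤ h x := by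
    intro x hx
    apply (hball ?_).le
    rw [Real.dist_eq, abs_lt]
    constructor <;> [linarith [hx.1]; linarith [hx.2]]
  have hnn : ∀ x ∈ Icc a b, 0 ≤ h x := fun x hx => sub_nonneg.mpr (hle x hx)
  have hA := intervalIntegral.integral_add_adjacent_intervals (μ := MeasureTheory.volume)
    (hh.intervalIntegrable a u) (hh.intervalIntegrable u w)
  have hB := intervalIntegral.integral_add_adjacent_intervals (μ := MeasureTheory.volume)
    (hh.intervalIntegrable a w) (hh.intervalIntegrable w b)
  have h0ab : ∫ t in a..b, h t = 0 := by
    simp only [hhdef]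
    rw [intervalIntegral.integral_sub (hg.intervalIntegrable a b) (hf.intervalIntegrable a b)]
    rw [hint]; ring
  have hp1 : 0 ≤ ∫ t in a..u, h t :=
    intervalIntegral.integral_nonneg hau
      (fun x hx => hnn x ⟨hx.1, le_trans hx.2 (le_trans hut₀ ht₀.2)⟩)
  have hp3 : 0 ≤ ∫ t in w..b, h t :=
    intervalIntegral.integral_nonneg hwb
      (fun x hx => hnn x ⟨le_trans hau (le_trans hut₀ (le_trans ht₀w hx.1)), hx.2⟩)
  have hp2 : ε * (w - u) ≤ ∫ t in u..w, h t := by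
    have := intervalIntegral.integral_mono_on huw.le
      (intervalIntegrable_const (μ := MeasureTheory.volume)) (hh.intervalIntegrable u w)
      (fun x hx => hmid x hx)
    rw [intervalIntegral.integral_const, smul_eq_mul] at this
    calc ε * (w - u) = (w - u) * ε := by ring
      _ ≤ _ := this
  have hpos2 : 0 < ε * (w - u) := mul_pos hεpos (by linarith)
  rw [← hA] at hB
  rw [h0ab] at hB
  linarith

lemma rigid (a b k : ℝ) (κ v : ℝ → ℝ) (hab : a < b) (hk : k ≤ (π / (b - a)) ^ 2)
    (hκc : ContinuousOn κ (Icc a b))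
    (hode : ∀ s ∈ Icc a b, deriv (deriv v) s = -(κ s * v s))
    (heq : ∀ t ∈ Icc a b, v t = sk k (t - a)) :
    ∀ t ∈ Icc a b, κ t = k := by
  have hL : (0:ℝ) < b - a := by linarith
  have hIoo : ∀ t ∈ Ioo a b, κ t = k := by
    intro t ht
    have hmem : Ioo a b ∈ 𝓝 t := isOpen_Ioo.mem_nhds ht
    have hev : v =ᶠ[𝓝 t] (fun u => sk k (u - a)) :=
      eventually_of_mem hmem fun x hx => heq x ⟨hx.1.le, hx.2.le⟩
    have h2 : deriv (deriv v) t = deriv (deriv (fun u => sk k (u - a))) t := hev.deriv.deriv_eq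
    have hd1 : deriv (fun u => sk k (u - a)) = fun u => ck k (u - a) :=
      funext fun x => (hasDerivAt_sk_shift k a x).deriv
    have hd2 : deriv (fun u => ck k (u - a)) t = -k * sk k (t - a) :=
      (hasDerivAt_ck_shift k a t).deriv
    have h3 : deriv (deriv v) t = -k * sk k (t - a) := by rw [h2, hd1, hd2]
    have h4 := hode t ⟨ht.1.le, ht.2.le⟩
    rw [heq t ⟨ht.1.le, ht.2.le⟩] at h4
    have hpos : 0 < sk k (t - a) := sk_pos hL hk ⟨sub_pos.mpr ht.1, by linarith [ht.2]⟩
    have h5 : κ t * sk k (t - a) = k * sk k (t - a) := by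
      rw [h4] at h3; linarith
    exact mul_right_cancel₀ hpos.ne' h5
  intro t ht
  rcases lt_or_eq_of_le ht.1 with hta | hta
  · rcases lt_or_eq_of_le ht.2 with htb | htb
    · exact hIoo t ⟨hta, htb⟩
    · -- t = b
      subst htb
      have hIccmem : Icc a t ∈ 𝓝[<] t :=
        mem_of_superset (Ioo_mem_nhdsLT_of_mem (right_mem_Ioc.mpr hta)) Ioo_subset_Icc_self
      have htd : Tendsto κ (𝓝[<] t) (𝓝 (κ t)) :=
        (hκc t ht).tendsto.mono_left (nhdsWithin_le_iff.mpr hIccmem)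
      have hconst : Tendsto κ (𝓝[<] t) (𝓝 k) := by
        apply Tendsto.congr' _ tendsto_const_nhds
        filter_upwards [Ioo_mem_nhdsLT_of_mem (right_mem_Ioc.mpr hta)] with x hx
        exact (hIoo x hx).symm
      exact tendsto_nhds_unique htd hconst
  · -- t = a
    rw [← hta]
    have hIccmem : Icc a b ∈ 𝓝[>] a :=
      mem_of_superset (Ioo_mem_nhdsGT_of_mem (left_mem_Ico.mpr hab)) Ioo_subset_Icc_self
    have htd : Tendsto κ (𝓝[>] a) (𝓝 (κ a)) :=
      (hκc a (left_mem_Icc.mpr hab.le)).tendsto.mono_left (nhdsWithin_le_iff.mpr hIccmem)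
    have hconst : Tendsto κ (𝓝[>] a) (𝓝 k) := by
      apply Tendsto.congr' _ tendsto_const_nhds
      filter_upwards [Ioo_mem_nhdsGT_of_mem (left_mem_Ico.mpr hab)] with x hx
      exact (hIoo x hx).symm
    exact tendsto_nhds_unique htd hconst

end Aux

open Filter Topology in
/-- comparison bounds for solutions of `y''' + κy' = 0` with
`y(a)=0`, `y'(a)=0`, `y''(a)=1` under curvature bounds `k₀ ≤ κ ≤ k₁`,
`k₁ ≤ (π/(b−a))²`, together with the rigidity statement for equality. -/
theorem y_coordinate_bounds (a b k₀ k₁ : ℝ) (hab : a < b) (κ y : ℝ → ℝ)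
    (hκ : ContinuousOn κ (Set.Icc a b)) (hy : ContDiff ℝ 3 y)
    (hode : ∀ s ∈ Set.Icc a b, iteratedDeriv 3 y s + κ s * deriv y s = 0)
    (hya : y a = 0) (hya' : deriv y a = 0) (hya'' : iteratedDeriv 2 y a = 1)
    (hκbd : ∀ s ∈ Set.Icc a b, k₀ ≤ κ s ∧ κ s ≤ k₁)
    (hk₁ : k₁ ≤ (Real.pi / (b - a)) ^ 2) :
    ybar k₁ (b - a) ≤ y b ∧ y b ≤ ybar k₀ (b - a) ∧
    (y b = ybar k₁ (b - a) → ∀ s ∈ Set.Icc a b, κ s = k₁) ∧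
    (y b = ybar k₀ (b - a) → ∀ s ∈ Set.Icc a b, κ s = k₀) := by
  have hL : (0:ℝ) < b - a := by linarith
  set v := deriv y with hvdef
  have hv2 : ContDiff ℝ 2 v := by
    have h : ContDiff ℝ ((2:WithTop ℕ∞)+1) y := by norm_num at hy ⊢; exact hy
    exact (contDiff_succ_iff_deriv.mp h).2.2
  have hvdiff : Differentiable ℝ v := hv2.differentiable (by norm_num)
  have hv1 : ContDiff ℝ 1 (deriv v) := by
    have h : ContDiff ℝ ((1:WithTop ℕ∞)+1) v := by norm_num at hv2 ⊢; exact hv2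
    exact (contDiff_succ_iff_deriv.mp h).2.2
  have hv'diff : Differentiable ℝ (deriv v) := hv1.differentiable (by norm_num)
  have hydiff : Differentiable ℝ y := hy.differentiable (by norm_num)
  have hi3 : iteratedDeriv 3 y = deriv (deriv v) := by
    simp [hvdef, iteratedDeriv_succ, iteratedDeriv_zero]
  have hode' : ∀ s ∈ Set.Icc a b, deriv (deriv v) s = -(κ s * v s) := by
    intro s hs; have := hode s hs; rw [hi3] at this; linarith
  have hva' : deriv v a = 1 := by
    have h2 : iteratedDeriv 2 y = deriv v := by
      simp [hvdef, iteratedDeriv_succ, iteratedDeriv_zero]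
    rw [← h2]; exact hya''
  have hk₀ : k₀ ≤ (Real.pi/(b-a))^2 :=
    le_trans (le_trans (hκbd a ⟨le_refl a, hab.le⟩).1 (hκbd a ⟨le_refl a, hab.le⟩).2) hk₁
  have hlow := lower a b k₁ κ v hab hk₁ hvdiff hv'diff hode'
    (fun s hs => (hκbd s hs).2) hya' hva'
  have hnn : ∀ u ∈ Set.Icc a b, 0 ≤ v u := fun u hu =>
    le_trans (sk_nonneg hL hk₁ ⟨by linarith [hu.1], by linarith [hu.2]⟩) (hlow u hu)
  have hupp := upper a b k₀ κ v hab hk₀ hvdiff hv'diff hode'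
    (fun s hs => (hκbd s hs).1) hya' hva' hnn
  have hskcont : ∀ k : ℝ, Continuous (fun t => sk k (t - a)) := fun k =>
    (continuous_sk k).comp (continuous_id.sub continuous_const)
  have hIy : (∫ t in a..b, v t) = y b := by
    have h := intervalIntegral.integral_eq_sub_of_hasDerivAt (f := y) (f' := v)
      (fun x _ => (hydiff x).hasDerivAt) (hvdiff.continuous.intervalIntegrable a b)
    rw [h, hya, sub_zero]
  have hIs : ∀ k : ℝ, (∫ t in a..b, sk k (t - a)) = ybar k (b - a) := by
    intro k
    have hD : ∀ x ∈ Set.uIcc a b, HasDerivAt (fun t => ybar k (t - a)) (sk k (x - a)) x :=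
      fun x _ => by simpa using (hasDerivAt_ybar k (x - a)).comp_sub_const x a
    have h := intervalIntegral.integral_eq_sub_of_hasDerivAt hD
      ((hskcont k).intervalIntegrable a b)
    rw [h]
    simp [ybar_zero]
  have hIlow : ybar k₁ (b-a) ≤ y b := by
    rw [← hIy, ← hIs k₁]
    exact intervalIntegral.integral_mono_on hab.le
      ((hskcont k₁).intervalIntegrable a b)
      (hvdiff.continuous.intervalIntegrable a b) hlow
  have hIupp : y b ≤ ybar k₀ (b-a) := by
    rw [← hIy, ← hIs k₀]
    exact intervalIntegral.integral_mono_on hab.le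
      (hvdiff.continuous.intervalIntegrable a b)
      ((hskcont k₀).intervalIntegrable a b) hupp
  refine ⟨hIlow, hIupp, ?_, ?_⟩
  · intro hEq
    have hint : (∫ t in a..b, sk k₁ (t-a)) = ∫ t in a..b, v t := by
      rw [hIy, hIs, hEq]
    have heq := eq_of_integral_eq hab (hskcont k₁) hvdiff.continuous hlow hint
    exact rigid a b k₁ κ v hab hk₁ hκ hode' (fun t ht => (heq t ht).symm)
  · intro hEq
    have hint : (∫ t in a..b, v t) = ∫ t in a..b, sk k₀ (t-a) := by
      rw [hIy, hIs, hEq]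
    have heq := eq_of_integral_eq hab hvdiff.continuous (hskcont k₀) hupp hint
    exact rigid a b k₀ κ v hab hk₀ hκ hode' heq
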